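/- arXiv:2603.29184 — 2 statements merged into one kernel-verified Lean document; each statement's English description precedes it below -/
import Mathlib

section
/- Let N ∈ ℕ and let S : ℕ → Finset (ℝ × ℝ) with |S_n| = N for all n. Let Ũ : ℝ² → ℝ, U* ∈ ℝ, ε > 0, B(ε) := {x : Ũ(x) ≥ U* − ε}, thresholds τ_n ≤ U* − ε for all n, Λ_n := {x : Ũ(x) ≥ τ_n}, and suppose S_{n+1} = (S_n ∩ Λ_n) ∪ C_n for finite sets C_n. Then the number of rounds n at which a fresh near-optimal point is injected, i.e. #{n : (C_n ∩ B(ε)) \ S_n ≠ ∅}, is at most N (budget-limited fresh hits, the pigeonhole core of the accumulation theorem). -/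
/-- **Budget-limited fresh hits** (pigeonhole core of the accumulation theorem).
With fixed budget `|S n| = N`, retention regions `Λ n = {x : U x ≥ τ n}`,
`τ n ≤ U* − ε`, and R3 updates `S (n+1) = (S n ∩ Λ n) ∪ C n`, the number of
rounds at which a fresh near-optimal point is injected, i.e. rounds `n` with
`(C n ∩ B(ε)) \ S n ≠ ∅` where `B(ε) = {x : U x ≥ U* − ε}`, is at most `N`. -/
theorem budget_limited_fresh_hits
    (N : ℕ)
    (S : ℕ → Finset (ℝ × ℝ)) (hN : ∀ n, (S n).card = N)
    (U : ℝ × ℝ → ℝ) (Ustar ε : ℝ) (hε : 0 < ε)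
    (τ : ℕ → ℝ) (hτ : ∀ n, τ n ≤ Ustar - ε)
    (C : ℕ → Finset (ℝ × ℝ))
    (hupd : ∀ n, (↑(S (n + 1)) : Set (ℝ × ℝ))
      = ((↑(S n) : Set (ℝ × ℝ)) ∩ {x | U x ≥ τ n}) ∪ (↑(C n) : Set (ℝ × ℝ))) :
    {n : ℕ | ((((↑(C n) : Set (ℝ × ℝ)) ∩ {x | U x ≥ Ustar - ε})
        \ (↑(S n) : Set (ℝ × ℝ)))).Nonempty}.Finite ∧
    {n : ℕ | ((((↑(C n) : Set (ℝ × ℝ)) ∩ {x | U x ≥ Ustar - ε})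
        \ (↑(S n) : Set (ℝ × ℝ)))).Nonempty}.ncard ≤ N := by
  set A : Set ℕ := {n : ℕ | ((((↑(C n) : Set (ℝ × ℝ)) ∩ {x | U x ≥ Ustar - ε})
        \ (↑(S n) : Set (ℝ × ℝ)))).Nonempty} with hA
  set g : ℕ → ℕ := fun n => ((S n).filter (fun x => Ustar - ε ≤ U x)).card with hg
  -- monotone step: filtered set grows
  have hsub : ∀ n, (S n).filter (fun x => Ustar - ε ≤ U x)
      ⊆ (S (n + 1)).filter (fun x => Ustar - ε ≤ U x) := by
    intro n x hx
    rw [Finset.mem_filter] at hx ⊢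
    refine ⟨?_, hx.2⟩
    have : x ∈ (↑(S (n + 1)) : Set (ℝ × ℝ)) := by
      rw [hupd n]
      exact Or.inl ⟨hx.1, le_trans (hτ n) hx.2⟩
    exact_mod_cast this
  have hmono : Monotone g := monotone_nat_of_le_succ fun n => Finset.card_le_card (hsub n)
  -- strict increase at hits
  have hstrict : ∀ n ∈ A, g n < g (n + 1) := by
    intro n hn
    obtain ⟨x, ⟨hxC, hxB⟩, hxS⟩ := hn
    apply Finset.card_lt_card
    refine ⟨hsub n, fun hsub' => ?_⟩
    have hx1 : x ∈ (S (n + 1)).filter (fun x => Ustar - ε ≤ U x) := by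
      rw [Finset.mem_filter]
      refine ⟨?_, hxB⟩
      have : x ∈ (↑(S (n + 1)) : Set (ℝ × ℝ)) := by
        rw [hupd n]; exact Or.inr hxC
      exact_mod_cast this
    have := (Finset.mem_filter.mp (hsub' hx1)).1
    exact hxS this
  have hbound : ∀ n, g n ≤ N := fun n => le_trans (Finset.card_filter_le _ _) (le_of_eq (hN n))
  have hltN : ∀ n ∈ A, g n < N := fun n hn => lt_of_lt_of_le (hstrict n hn) (hbound (n + 1))
  have hinj : Set.InjOn g A := by
    intro m hm n hn hmn
    by_contra hne
    rcases lt_or_gt_of_ne hne with h | h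
    · exact absurd hmn (ne_of_lt (lt_of_lt_of_le (hstrict m hm) (hmono h)))
    · exact absurd hmn.symm (ne_of_lt (lt_of_lt_of_le (hstrict n hn) (hmono h)))
  have himg : g '' A ⊆ ↑(Finset.range N) := by
    rintro _ ⟨n, hn, rfl⟩
    simp [hltN n hn]
  have hfinimg : (g '' A).Finite := Set.Finite.subset (Finset.range N).finite_toSet himg
  have hfin : A.Finite := Set.Finite.of_finite_image hfinimg hinj
  refine ⟨hfin, ?_⟩
  calc A.ncard = (g '' A).ncard := (Set.ncard_image_of_injOn hinj).symm
    _ ≤ (↑(Finset.range N) : Set ℕ).ncard :=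
        Set.ncard_le_ncard himg (Finset.range N).finite_toSet
    _ = N := by rw [Set.ncard_coe_finset, Finset.card_range]
end

section
/- Let μ > 0 and let F be a real 2×2 matrix. Write I₁ := trace(Fᵀ F) and J := det F, and for θ ∈ ℝ let n(θ) := (cos θ, sin θ) and λ(θ) := ‖F·n(θ)‖ (Euclidean norm of the image of the unit direction). Then the orientation average of the single-fiber energy w(λ) = μ(λ⁶/6 − λ⁴/4) admits the closed form (1/(2π)) ∫₀^{2π} μ·(λ(θ)⁶/6 − λ(θ)⁴/4) dθ = (μ/96)·(5 I₁³ − 9 I₁² − 12 I₁ J² + 12 J²). Equivalently, the macroscopic energy density W(F) = (μ/96)(5I₁³ − 9I₁² − 12 I₁ J² + 12 J² + 8) equals this orientation average plus the constant μ/12. -/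
open Real Matrix


lemma Ic2 : ∫ θ in (0:ℝ)..(2*π), cos θ ^ 2 = π := by
  simp
lemma Is2 : ∫ θ in (0:ℝ)..(2*π), sin θ ^ 2 = π := by
  simp
lemma Ic4 : ∫ θ in (0:ℝ)..(2*π), cos θ ^ 4 = 3*π/4 := by
  rw [show (4:ℕ) = 2+2 from rfl, integral_cos_pow, Ic2]
  simp; ring
lemma Is4 : ∫ θ in (0:ℝ)..(2*π), sin θ ^ 4 = 3*π/4 := by
  rw [show (4:ℕ) = 2+2 from rfl, integral_sin_pow, Is2]
  simp; ring
lemma Ic6 : ∫ θ in (0:ℝ)..(2*π), cos θ ^ 6 = 5*π/8 := by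
  have := @integral_cos_pow 0 (2*π) 4
  norm_num [Ic4] at this
  linarith
lemma Is6 : ∫ θ in (0:ℝ)..(2*π), sin θ ^ 6 = 5*π/8 := by
  have := @integral_sin_pow 0 (2*π) 4
  norm_num [Is4] at this
  linarith
lemma Isc5 : ∫ θ in (0:ℝ)..(2*π), sin θ * cos θ ^ 5 = 0 := by
  have := @integral_sin_pow_mul_cos_pow_odd 0 (2*π) 1 2
  simpa using this
lemma Is3c3 : ∫ θ in (0:ℝ)..(2*π), sin θ ^ 3 * cos θ ^ 3 = 0 := by
  have := @integral_sin_pow_mul_cos_pow_odd 0 (2*π) 3 1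
  simpa using this
lemma Is5c : ∫ θ in (0:ℝ)..(2*π), sin θ ^ 5 * cos θ = 0 := by
  have := @integral_sin_pow_mul_cos_pow_odd 0 (2*π) 5 0
  simpa using this
lemma Isc3 : ∫ θ in (0:ℝ)..(2*π), sin θ * cos θ ^ 3 = 0 := by
  have := @integral_sin_pow_mul_cos_pow_odd 0 (2*π) 1 1
  simpa using this
lemma Is3c : ∫ θ in (0:ℝ)..(2*π), sin θ ^ 3 * cos θ = 0 := by
  have := @integral_sin_pow_mul_cos_pow_odd 0 (2*π) 3 0
  simpa using this
lemma Is2c4 : ∫ θ in (0:ℝ)..(2*π), sin θ ^ 2 * cos θ ^ 4 = π/8 := by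
  have h : ∀ θ:ℝ, sin θ ^2 * cos θ^4 = cos θ^4 - cos θ^6 := by
    intro θ
    linear_combination (cos θ^4) * sin_sq_add_cos_sq θ
  rw [intervalIntegral.integral_congr (g := fun θ => cos θ^4 - cos θ^6) (fun θ _ => h θ),
    intervalIntegral.integral_sub (by apply Continuous.intervalIntegrable; fun_prop)
      (by apply Continuous.intervalIntegrable; fun_prop), Ic4, Ic6]
  ring
lemma Is4c2 : ∫ θ in (0:ℝ)..(2*π), sin θ ^ 4 * cos θ ^ 2 = π/8 := by
  have h : ∀ θ:ℝ, sin θ ^4 * cos θ^2 = sin θ^4 - sin θ^6 := by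
    intro θ
    linear_combination (sin θ^4) * sin_sq_add_cos_sq θ
  rw [intervalIntegral.integral_congr (g := fun θ => sin θ^4 - sin θ^6) (fun θ _ => h θ),
    intervalIntegral.integral_sub (by apply Continuous.intervalIntegrable; fun_prop)
      (by apply Continuous.intervalIntegrable; fun_prop), Is4, Is6]
  ring
lemma Is2c2 : ∫ θ in (0:ℝ)..(2*π), sin θ ^ 2 * cos θ ^ 2 = π/4 := by
  have h : ∀ θ:ℝ, sin θ ^2 * cos θ^2 = cos θ^2 - cos θ^4 := by
    intro θ
    have := sin_sq_add_cos_sq θ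
    nlinarith [this]
  rw [intervalIntegral.integral_congr (g := fun θ => cos θ^2 - cos θ^4) (fun θ _ => h θ),
    intervalIntegral.integral_sub (by apply Continuous.intervalIntegrable; fun_prop)
      (by apply Continuous.intervalIntegrable; fun_prop), Ic2, Ic4]
  ring


lemma fiber_combo (k1 k2 k3 k4 k5 k6 k7 k8 k9 k10 k11 k12 : ℝ) :
    (∫ θ in (0:ℝ)..(2*π), (k1 * (cos θ^6) + k2 * (sin θ * cos θ^5) + k3 * (sin θ^2 * cos θ^4) + k4 * (sin θ^3 * cos θ^3) + k5 * (sin θ^4 * cos θ^2) + k6 * (sin θ^5 * cos θ) + k7 * (sin θ^6) + k8 * (cos θ^4) + k9 * (sin θ * cos θ^3) + k10 * (sin θ^2 * cos θ^2) + k11 * (sin θ^3 * cos θ) + k12 * (sin θ^4)))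
    = 5*π/8*(k1+k7) + π/8*(k3+k5) + 3*π/4*(k8+k12) + π/4*k10 := by
  repeat rw [intervalIntegral.integral_add (by apply Continuous.intervalIntegrable; fun_prop)
    (by apply Continuous.intervalIntegrable; fun_prop)]
  simp only [intervalIntegral.integral_const_mul]
  rw [Ic6, Isc5, Is2c4, Is3c3, Is4c2, Is5c, Is6, Ic4, Isc3, Is2c2, Is3c, Is4]
  ring

set_option maxHeartbeats 1600000 in
/-- **Closed form of the orientation-averaged fiber energy.**
For a planar deformation gradient `F` with invariants `I₁ = tr(FᵀF)` and
`J = det F`, the isotropic orientation average of the single-fiber energy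
`w(λ) = μ(λ⁶/6 − λ⁴/4)` at stretch `λ(θ) = ‖F·n(θ)‖`, `n(θ) = (cos θ, sin θ)`,
equals `(μ/96)(5I₁³ − 9I₁² − 12I₁J² + 12J²)`; equivalently, the macroscopic
density `W(F) = (μ/96)(5I₁³ − 9I₁² − 12I₁J² + 12J² + 8)` equals this average
plus the constant `μ/12`. -/
theorem orientation_average_closed_form
    (μ : ℝ) (hμ : 0 < μ) (F : Matrix (Fin 2) (Fin 2) ℝ) :
    ((1 / (2 * π)) * ∫ θ in (0:ℝ)..(2 * π),
        μ * ((Real.sqrt ((F.mulVec ![Real.cos θ, Real.sin θ] 0) ^ 2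
                + (F.mulVec ![Real.cos θ, Real.sin θ] 1) ^ 2)) ^ 6 / 6
            - (Real.sqrt ((F.mulVec ![Real.cos θ, Real.sin θ] 0) ^ 2
                + (F.mulVec ![Real.cos θ, Real.sin θ] 1) ^ 2)) ^ 4 / 4))
      = (μ / 96) * (5 * (Matrix.trace (Fᵀ * F)) ^ 3
          - 9 * (Matrix.trace (Fᵀ * F)) ^ 2
          - 12 * (Matrix.trace (Fᵀ * F)) * (F.det) ^ 2
          + 12 * (F.det) ^ 2) ∧
    (μ / 96) * (5 * (Matrix.trace (Fᵀ * F)) ^ 3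
          - 9 * (Matrix.trace (Fᵀ * F)) ^ 2
          - 12 * (Matrix.trace (Fᵀ * F)) * (F.det) ^ 2
          + 12 * (F.det) ^ 2 + 8)
      = ((1 / (2 * π)) * ∫ θ in (0:ℝ)..(2 * π),
        μ * ((Real.sqrt ((F.mulVec ![Real.cos θ, Real.sin θ] 0) ^ 2
                + (F.mulVec ![Real.cos θ, Real.sin θ] 1) ^ 2)) ^ 6 / 6
            - (Real.sqrt ((F.mulVec ![Real.cos θ, Real.sin θ] 0) ^ 2
                + (F.mulVec ![Real.cos θ, Real.sin θ] 1) ^ 2)) ^ 4 / 4))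
        + μ / 12 := by
  set a := F 0 0 with ha
  set b := F 0 1 with hb
  set c := F 1 0 with hc
  set d := F 1 1 with hd
  have hI : Matrix.trace (Fᵀ * F) = a^2 + b^2 + c^2 + d^2 := by
    simp [Matrix.trace_fin_two, Matrix.mul_apply, Fin.sum_univ_two, ha, hb, hc, hd]; ring
  have hJ : F.det = a * d - b * c := by
    simp [Matrix.det_fin_two, ha, hb, hc, hd]
  have e0 : ∀ θ : ℝ, F.mulVec ![Real.cos θ, Real.sin θ] 0 = a * cos θ + b * sin θ := by
    intro θ; simp [Matrix.mulVec, dotProduct, Fin.sum_univ_two, ha, hb]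
  have e1 : ∀ θ : ℝ, F.mulVec ![Real.cos θ, Real.sin θ] 1 = c * cos θ + d * sin θ := by
    intro θ; simp [Matrix.mulVec, dotProduct, Fin.sum_univ_two, hc, hd]
  have h6 : ∀ x : ℝ, 0 ≤ x → Real.sqrt x ^ 6 = x ^ 3 := by
    intro x hx; rw [show (6:ℕ) = 2*3 from rfl, pow_mul, Real.sq_sqrt hx]
  have h4 : ∀ x : ℝ, 0 ≤ x → Real.sqrt x ^ 4 = x ^ 2 := by
    intro x hx; rw [show (4:ℕ) = 2*2 from rfl, pow_mul, Real.sq_sqrt hx]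
  have hcong : (∫ θ in (0:ℝ)..(2 * π),
        μ * ((Real.sqrt ((F.mulVec ![Real.cos θ, Real.sin θ] 0) ^ 2
                + (F.mulVec ![Real.cos θ, Real.sin θ] 1) ^ 2)) ^ 6 / 6
            - (Real.sqrt ((F.mulVec ![Real.cos θ, Real.sin θ] 0) ^ 2
                + (F.mulVec ![Real.cos θ, Real.sin θ] 1) ^ 2)) ^ 4 / 4)) =
      ∫ θ in (0:ℝ)..(2*π), ((μ * ((1/6)*c^6 + (1/2)*a^2*c^4 + (1/2)*a^4*c^2 + (1/6)*a^6)) * (cos θ^6) + (μ * ((1)*c^5*d + (1)*a*b*c^4 + (2)*a^2*c^3*d + (2)*a^3*b*c^2 + (1)*a^4*c*d + (1)*a^5*b)) * (sin θ * cos θ^5) + (μ * ((5/2)*c^4*d^2 + (1/2)*b^2*c^4 + (4)*a*b*c^3*d + (3)*a^2*c^2*d^2 + (3)*a^2*b^2*c^2 + (4)*a^3*b*c*d + (1/2)*a^4*d^2 + (5/2)*a^4*b^2)) * (sin θ^2 * cos θ^4) + (μ * ((10/3)*c^3*d^3 + (2)*b^2*c^3*d + (6)*a*b*c^2*d^2 +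 (2)*a*b^3*c^2 + (2)*a^2*c*d^3 + (6)*a^2*b^2*c*d + (2)*a^3*b*d^2 + (10/3)*a^3*b^3)) * (sin θ^3 * cos θ^3) + (μ * ((5/2)*c^2*d^4 + (3)*b^2*c^2*d^2 + (1/2)*b^4*c^2 + (4)*a*b*c*d^3 + (4)*a*b^3*c*d + (1/2)*a^2*d^4 + (3)*a^2*b^2*d^2 + (5/2)*a^2*b^4)) * (sin θ^4 * cos θ^2) + (μ * ((1)*c*d^5 + (2)*b^2*c*d^3 + (1)*b^4*c*d + (1)*a*b*d^4 + (2)*a*b^3*d^2 + (1)*a*b^5)) * (sin θ^5 * cos θ) + (μ * ((1/6)*d^6 + (1/2)*b^2*d^4 + (1/2)*b^4*d^2 + (1/6)*b^6)) * (sin θ^6) + (μ * ((-1/4)*c^4 + (-1/2)*a^2*c^2 + (-1/4)*a^4)) * (cos θ^4) + (μ * ((-1)*c^3*d + (-1)*a*b*c^2 + (-1)*a^2*c*d + (-1)*a^3*b)) * (sin θ * cos θ^3) + (μ * ((-3/2)*c^2*d^2 + (-1/2)*b^2*c^2 + (-2)*a*b*c*d + (-1/2)*a^2*d^2 + (-3/2)*a^2*b^2))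 * (sin θ^2 * cos θ^2) + (μ * ((-1)*c*d^3 + (-1)*b^2*c*d + (-1)*a*b*d^2 + (-1)*a*b^3)) * (sin θ^3 * cos θ) + (μ * ((-1/4)*d^4 + (-1/2)*b^2*d^2 + (-1/4)*b^4)) * (sin θ^4)) := by
    apply intervalIntegral.integral_congr
    intro θ _
    simp only [e0, e1]
    have h0 : (0:ℝ) ≤ (a * cos θ + b * sin θ)^2 + (c * cos θ + d * sin θ)^2 := by positivity
    rw [h6 _ h0, h4 _ h0]
    ring
  have h1 : ((1 / (2 * π)) * ∫ θ in (0:ℝ)..(2 * π),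
        μ * ((Real.sqrt ((F.mulVec ![Real.cos θ, Real.sin θ] 0) ^ 2
                + (F.mulVec ![Real.cos θ, Real.sin θ] 1) ^ 2)) ^ 6 / 6
            - (Real.sqrt ((F.mulVec ![Real.cos θ, Real.sin θ] 0) ^ 2
                + (F.mulVec ![Real.cos θ, Real.sin θ] 1) ^ 2)) ^ 4 / 4))
      = (μ / 96) * (5 * (Matrix.trace (Fᵀ * F)) ^ 3
          - 9 * (Matrix.trace (Fᵀ * F)) ^ 2
          - 12 * (Matrix.trace (Fᵀ * F)) * (F.det) ^ 2
          + 12 * (F.det) ^ 2) := by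
    rw [hcong, fiber_combo, hI, hJ]
    field_simp
    ring
  exact ⟨h1, by rw [h1]; ring⟩
end
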